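/- Let Z ∈ ℝ^{d_z×n} be partitioned into blocks Z₁,...,Z_k with Z_j ∈ ℝ^{d_z×n_j} and ∑_j n_j = n, and suppose Z_jᵀ Z_ℓ = 0 for all j ≠ ℓ. Then the rate reduction satisfies ΔR(Z | Π) = (1/(2n)) ∑_{j=1}^{k} ∑_{p} log[ (1 + (d_z/(nε²)) σ_p(Z_j)²)ⁿ / (1 + (d_z/(n_jε²)) σ_p(Z_j)²)^{n_j} ], where ΔR(Z | Π) := R(Z) − ∑_j (n_j/n) R(Z_j). -/

import Mathlib

open Matrix

noncomputable def codingRate {d : ℕ} {m : Type*} [Fintype m] (ε : ℝ)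
    (Z : Matrix (Fin d) m ℝ) : ℝ :=
  (1 / 2) * Real.log ((1 + ((d : ℝ) / (Fintype.card m * ε ^ 2)) • (Z * Zᵀ)).det)

noncomputable def sval {d n : ℕ} (A : Matrix (Fin d) (Fin n) ℝ) : Fin n → ℝ :=
  fun p => Real.sqrt ((show (Aᵀ * A).IsHermitian by
      simpa [conjTranspose_eq_transpose_of_trivial] using Matrix.isHermitian_conjTranspose_mul_self A).eigenvalues
    (Tuple.sort ((show (Aᵀ * A).IsHermitian by
      simpa [conjTranspose_eq_transpose_of_trivial] using Matrix.isHermitian_conjTranspose_mul_self A).eigenvalues) p.rev))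

/-- The horizontal concatenation of a family of matrices `Z j : Matrix (Fin dz) (Fin (nj j)) ℝ`,
indexed by the sigma type of the column indices. -/
def blockConcat {dz k : ℕ} {nj : Fin k → ℕ}
    (Z : (j : Fin k) → Matrix (Fin dz) (Fin (nj j)) ℝ) :
    Matrix (Fin dz) ((j : Fin k) × Fin (nj j)) ℝ :=
  Matrix.of fun i q => Z q.1 i q.2

/-! By Sylvester's identity `det (1 + c W Wᵀ) = det (1 + c Wᵀ W)` the coding rate only sees the
Gram matrix of the columns, whose eigenvalues are the squared singular values. For pairwise
orthogonal blocks the Gram matrix of the concatenation is block diagonal with blocks `Z_jᵀ Z_j`,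
so `R(Z)` and every `R(Z_j)` are sums of `log (1 + c σ_p(Z_j)²)` over the same singular values,
only with `c = d / (n ε²)` resp. `c = d / (n_j ε²)`; the identity then holds term by term. -/

open Finset

theorem Matrix.IsHermitian.det_one_add_smul_eq_prod_eigenvalues {𝕜 n : Type*} [RCLike 𝕜]
    [Fintype n] [DecidableEq n] {A : Matrix n n 𝕜} (hA : A.IsHermitian) (c : ℝ) :
    (1 + c • A).det = ∏ i, ((1 + c * hA.eigenvalues i : ℝ) : 𝕜) := by
  have hcfc : 1 + c • A = cfc (fun x => 1 + c * x) A := by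
    rw [cfc_add .., cfc_const_one .., cfc_const_mul .., cfc_id' ..]
  rw [hcfc, hA.cfc_eq]
  simp [IsHermitian.cfc, -Unitary.conjStarAlgAut_apply]

theorem Matrix.det_blockDiagonal' {ι : Type*} [Fintype ι] [DecidableEq ι] [LinearOrder ι]
    {m : ι → Type*} [∀ i, Fintype (m i)] [∀ i, DecidableEq (m i)] {R : Type*} [CommRing R]
    (M : (i : ι) → Matrix (m i) (m i) R) :
    (blockDiagonal' M).det = ∏ i, (M i).det := by
  rw [(blockTriangular_blockDiagonal' M).det_fintype]
  refine prod_congr rfl fun i _ => ?_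
  let e : m i ≃ {x : (j : ι) × m j // x.1 = i} :=
    { toFun := fun p => ⟨⟨i, p⟩, rfl⟩
      invFun := fun x => x.2 ▸ x.1.2
      left_inv := fun p => rfl
      right_inv := fun ⟨⟨j, p⟩, h⟩ => by subst h; rfl }
  rw [← det_submatrix_equiv_self e]
  congr 1
  ext p q
  exact blockDiagonal'_apply_eq M i p q

theorem isHermitian_transpose_mul_self {m n : Type*} [Fintype m] (A : Matrix m n ℝ) :
    (Aᵀ * A).IsHermitian := by
  simpa [conjTranspose_eq_transpose_of_trivial] using isHermitian_conjTranspose_mul_self A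

theorem prod_comp_sval_sq {β : Type*} [CommMonoid β] {d m : ℕ} (A : Matrix (Fin d) (Fin m) ℝ)
    (f : ℝ → β) :
    ∏ p, f (sval A p ^ 2) = ∏ i, f ((isHermitian_transpose_mul_self A).eigenvalues i) := by
  set hA := isHermitian_transpose_mul_self A
  set σ : Equiv.Perm (Fin m) := Fin.revPerm.trans (Tuple.sort hA.eigenvalues)
  have hsq : ∀ p, sval A p ^ 2 = hA.eigenvalues (σ p) :=
    fun p => Real.sq_sqrt (eigenvalues_conjTranspose_mul_self_nonneg A _)
  simp only [hsq]
  exact Equiv.prod_comp σ fun i => f (hA.eigenvalues i)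

theorem det_one_add_smul_transpose_mul_self {d m : ℕ} (c : ℝ) (A : Matrix (Fin d) (Fin m) ℝ) :
    (1 + c • (Aᵀ * A)).det = ∏ p, (1 + c * sval A p ^ 2) := by
  rw [(isHermitian_transpose_mul_self A).det_one_add_smul_eq_prod_eigenvalues,
    prod_comp_sval_sq A (fun x => 1 + c * x)]
  rfl

theorem det_one_add_smul_mul_transpose_self {d m : ℕ} (c : ℝ) (A : Matrix (Fin d) (Fin m) ℝ) :
    (1 + c • (A * Aᵀ)).det = ∏ p, (1 + c * sval A p ^ 2) := by
  rw [← det_one_add_smul_transpose_mul_self, ← Matrix.mul_smul, det_one_add_mul_comm,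
    Matrix.smul_mul]

theorem log_prod_one_add_mul_sq {ι : Type*} [Fintype ι] {c : ℝ} (hc : 0 ≤ c) (x : ι → ℝ) :
    Real.log (∏ i, (1 + c * x i ^ 2)) = ∑ i, Real.log (1 + c * x i ^ 2) :=
  Real.log_prod fun i _ => by positivity

theorem codingRate_eq_sum_log_sval {d m : ℕ} (ε : ℝ) (A : Matrix (Fin d) (Fin m) ℝ) :
    codingRate ε A = 1 / 2 * ∑ p, Real.log (1 + d / (m * ε ^ 2) * sval A p ^ 2) := by
  rw [codingRate, Fintype.card_fin, det_one_add_smul_mul_transpose_self,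
    log_prod_one_add_mul_sq (by positivity)]

theorem transpose_blockConcat_mul_self {dz k : ℕ} {nj : Fin k → ℕ}
    {Z : (j : Fin k) → Matrix (Fin dz) (Fin (nj j)) ℝ}
    (horth : ∀ j ℓ, j ≠ ℓ → (Z j)ᵀ * (Z ℓ) = 0) :
    (blockConcat Z)ᵀ * blockConcat Z = blockDiagonal' fun j => (Z j)ᵀ * Z j := by
  ext ⟨j, p⟩ ⟨ℓ, q⟩
  rcases eq_or_ne j ℓ with rfl | hjℓ
  · simp [blockDiagonal'_apply_eq, Matrix.mul_apply, blockConcat]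
  · simpa [blockDiagonal'_apply_ne _ _ _ hjℓ, Matrix.mul_apply, blockConcat] using
      congrFun₂ (horth j ℓ hjℓ) p q

theorem codingRate_blockConcat {dz k : ℕ} {nj : Fin k → ℕ} (ε : ℝ)
    {Z : (j : Fin k) → Matrix (Fin dz) (Fin (nj j)) ℝ}
    (horth : ∀ j ℓ, j ≠ ℓ → (Z j)ᵀ * (Z ℓ) = 0) :
    codingRate ε (blockConcat Z) = 1 / 2 * ∑ j, ∑ p,
      Real.log (1 + dz / ((∑ j, nj j : ℕ) * ε ^ 2) * sval (Z j) p ^ 2) := by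
  set c : ℝ := dz / ((∑ j, nj j : ℕ) * ε ^ 2)
  have hc : 0 ≤ c := by positivity
  have hdet : (1 + c • (blockConcat Z * (blockConcat Z)ᵀ)).det
      = ∏ j, ∏ p, (1 + c * sval (Z j) p ^ 2) := by
    rw [← Matrix.mul_smul, det_one_add_mul_comm, Matrix.smul_mul,
      transpose_blockConcat_mul_self horth, ← blockDiagonal'_smul, ← blockDiagonal'_one,
      ← blockDiagonal'_add, det_blockDiagonal']
    exact prod_congr rfl fun j _ => det_one_add_smul_transpose_mul_self c (Z j)
  simp only [codingRate, Fintype.card_sigma, Fintype.card_fin]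
  rw [hdet, Real.log_prod fun j _ => (prod_pos fun p _ => by positivity).ne']
  simp only [log_prod_one_add_mul_sq hc]

theorem stmt11_general {dz k n : ℕ} (ε : ℝ) (nj : Fin k → ℕ)
    (hn : n = ∑ j, nj j)
    (Z : (j : Fin k) → Matrix (Fin dz) (Fin (nj j)) ℝ)
    (horth : ∀ j ℓ, j ≠ ℓ → (Z j)ᵀ * (Z ℓ) = 0) :
    codingRate ε (blockConcat Z) - ∑ j, ((nj j : ℝ) / (n : ℝ)) * codingRate ε (Z j)
      = (1 / (2 * (n : ℝ))) * ∑ j, ∑ p : Fin (nj j),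
          Real.log ((1 + ((dz : ℝ) / (n * ε ^ 2)) * (sval (Z j) p) ^ 2) ^ n
            / (1 + ((dz : ℝ) / (nj j * ε ^ 2)) * (sval (Z j) p) ^ 2) ^ (nj j)) := by
  subst hn
  rw [codingRate_blockConcat ε horth]
  rcases eq_or_ne (∑ j, nj j) 0 with hn0 | hn0
  · -- with no columns at all, every `d / (0 * ε ^ 2)` and `1 / (2 * 0)` is the junk value `0`
    simp [hn0]
  simp only [codingRate_eq_sum_log_sval, mul_sum, ← sum_sub_distrib]
  refine sum_congr rfl fun j _ => sum_congr rfl fun p _ => ?_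
  rw [Real.log_div (by positivity) (by positivity), Real.log_pow, Real.log_pow]
  field_simp

/-- When the blocks are pairwise orthogonal, the rate reduction ΔR(Z | Π) equals the
closed-form expression in terms of the singular values of the blocks. -/
theorem stmt11 {dz k n : ℕ} (ε : ℝ) (hε : 0 < ε) (nj : Fin k → ℕ)
    (hnj : ∀ j, 0 < nj j) (hn : n = ∑ j, nj j)
    (Z : (j : Fin k) → Matrix (Fin dz) (Fin (nj j)) ℝ)
    (horth : ∀ j ℓ, j ≠ ℓ → (Z j)ᵀ * (Z ℓ) = 0) :
    codingRate ε (blockConcat Z) - ∑ j, ((nj j : ℝ) / (n : ℝ)) * codingRate ε (Z j)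
      = (1 / (2 * (n : ℝ))) * ∑ j, ∑ p : Fin (nj j),
          Real.log ((1 + ((dz : ℝ) / (n * ε ^ 2)) * (sval (Z j) p) ^ 2) ^ n
            / (1 + ((dz : ℝ) / (nj j * ε ^ 2)) * (sval (Z j) p) ^ 2) ^ (nj j)) :=
  stmt11_general ε nj hn Z horth
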